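/- (Validity of LB2) Let C be an initial configuration of the BRP in which every stack is nonempty, let 𝔅¹ be the set of blocks badly placed in C, and let 𝔅² be the top 1st layer of C. If the minimum label among the blocks of 𝔅² is strictly greater than the maximum over all stacks s of the minimum label occurring in stack s, then f(Fin B) ≥ |𝔅¹| + 1. -/

import Mathlib

/-- A configuration of the BRP: each stack holds a list of blocks, bottom to top. -/
abbrev Config (B S : ℕ) := Fin S → List (Fin B)

/-- Every block occurs exactly once among the stacks. -/
def IsConfig {B S : ℕ} (C : Config B S) : Prop :=
  ∀ b : Fin B, (∑ s : Fin S, (C s).count b) = 1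

/-- `a` lies strictly below `b` in stack `s` of `C`. -/
def StrictlyBelow {B S : ℕ} (C : Config B S) (s : Fin S) (a b : Fin B) : Prop :=
  ∃ i j : ℕ, i < j ∧ (C s)[i]? = some a ∧ (C s)[j]? = some b

/-- A block is badly placed if some smaller-labelled block lies below it in its stack. -/
def BadlyPlaced {B S : ℕ} (C : Config B S) (b : Fin B) : Prop :=
  ∃ s a, a < b ∧ StrictlyBelow C s a b

/-- Moves: retrieve the top block of a stack, or relocate the top block of one
stack onto another stack. -/
inductive Move (S : ℕ) where
  | retrieve (s : Fin S)
  | relocate (src dst : Fin S)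

def applyMove {B S : ℕ} (C : Config B S) : Move S → Config B S
  | .retrieve s => Function.update C s (C s).dropLast
  | .relocate src dst =>
    match (C src).getLast? with
    | some b =>
      let C' := Function.update C src (C src).dropLast
      Function.update C' dst (C' dst ++ [b])
    | none => C

def Enabled {B S : ℕ} (C : Config B S) : Move S → Prop
  | .retrieve s => ∃ b, (C s).getLast? = some b ∧ ∀ (s' : Fin S), ∀ b' ∈ C s', b ≤ b'
  | .relocate src dst => src ≠ dst ∧ C src ≠ []

def play {B S : ℕ} (C : Config B S) : List (Move S) → Config B S
  | [] => C
  | m :: ms => play (applyMove C m) ms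

def AllEnabled {B S : ℕ} (C : Config B S) : List (Move S) → Prop
  | [] => True
  | m :: ms => Enabled C m ∧ AllEnabled (applyMove C m) ms

/-- A feasible move sequence: every move is enabled and at the end all blocks
have been retrieved. -/
def Feasible {B S : ℕ} (C : Config B S) (ms : List (Move S)) : Prop :=
  AllEnabled C ms ∧ ∀ s, play C ms s = []

/-- `b` is the block moved by `m` (a relocation) performed in configuration `C`. -/
def MovedBlock {B S : ℕ} (C : Config B S) (m : Move S) (b : Fin B) : Prop :=
  ∃ src dst, m = .relocate src dst ∧ src ≠ dst ∧ (C src).getLast? = some b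

/-- The four types of relocation moves. -/
inductive MType where
  | BB | BG | GB | GG

/-- The relocation `m`, moving block `b` from configuration `C`, has the given type. -/
def MTypeOf {B S : ℕ} (C : Config B S) (m : Move S) (b : Fin B) : MType → Prop
  | .BB => BadlyPlaced C b ∧ BadlyPlaced (applyMove C m) b
  | .BG => BadlyPlaced C b ∧ ¬ BadlyPlaced (applyMove C m) b
  | .GB => ¬ BadlyPlaced C b ∧ BadlyPlaced (applyMove C m) b
  | .GG => ¬ BadlyPlaced C b ∧ ¬ BadlyPlaced (applyMove C m) b

/-- `m` is a relocation of a block of `𝔅`. -/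
def RelocIn {B S : ℕ} (𝔅 : Set (Fin B)) (C : Config B S) (m : Move S) : Prop :=
  ∃ b ∈ 𝔅, MovedBlock C m b

/-- `m` is a relocation of a block of `𝔅` of type `mt`. -/
def RelocTypeIn {B S : ℕ} (mt : MType) (𝔅 : Set (Fin B)) (C : Config B S) (m : Move S) : Prop :=
  ∃ b ∈ 𝔅, MovedBlock C m b ∧ MTypeOf C m b mt

/-- `m` is a non-BG relocation of a block of `𝔅`. -/
def RelocNonBGIn {B S : ℕ} (𝔅 : Set (Fin B)) (C : Config B S) (m : Move S) : Prop :=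
  ∃ b ∈ 𝔅, MovedBlock C m b ∧ ¬ MTypeOf C m b MType.BG

/-- Count the moves of a sequence satisfying `P` (evaluated in the configuration
in which each move is performed). -/
noncomputable def countMoves {B S : ℕ} (P : Config B S → Move S → Prop) :
    Config B S → List (Move S) → ℕ
  | _, [] => 0
  | C, m :: ms =>
    (@ite ℕ (P C m) (Classical.propDecidable _) 1 0) + countMoves P (applyMove C m) ms

/-- Minimum over feasible move sequences of the number of moves satisfying `P`. -/
noncomputable def fMin {B S : ℕ} (C : Config B S) (P : Config B S → Move S → Prop) : ℕ :=
  sInf { n | ∃ ms, Feasible C ms ∧ countMoves P C ms = n }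

/-- `f(𝔅)`: least number of relocations applied to blocks of `𝔅`. -/
noncomputable def fRel {B S : ℕ} (C : Config B S) (𝔅 : Set (Fin B)) : ℕ :=
  fMin C (RelocIn 𝔅)

/-- `f_mt(𝔅)`: least number of type-`mt` relocations applied to blocks of `𝔅`. -/
noncomputable def fTyp {B S : ℕ} (C : Config B S) (mt : MType) (𝔅 : Set (Fin B)) : ℕ :=
  fMin C (RelocTypeIn mt 𝔅)

/-- `f_nonBG(𝔅)`: least number of non-BG relocations applied to blocks of `𝔅`. -/
noncomputable def fNonBG {B S : ℕ} (C : Config B S) (𝔅 : Set (Fin B)) : ℕ :=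
  fMin C (RelocNonBGIn 𝔅)

/-- The top 1st layer: the topmost block of each stack. -/
def TopLayer {B S : ℕ} (C : Config B S) : Set (Fin B) :=
  {b | ∃ s, (C s).getLast? = some b}

/-- The top `k` layers: the topmost `k` blocks of every stack. -/
def TopK {B S : ℕ} (C : Config B S) (k : ℕ) : Set (Fin B) :=
  {b | ∃ s, b ∈ (C s).drop ((C s).length - k)}

/-- The top `j`-th layer: the `j`-th block from the top of every stack. -/
def TopJth {B S : ℕ} (C : Config B S) (j : ℕ) : Set (Fin B) :=
  {b | ∃ s, (C s)[(C s).length - j]? = some b}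

/-- A virtual layer: a set of blocks containing exactly one block from each stack. -/
def VirtualLayer {B S : ℕ} (C : Config B S) (V : Set (Fin B)) : Prop :=
  ∀ s : Fin S, ∃! b : Fin B, b ∈ V ∧ b ∈ C s

/-- `a` lies at or below the `V`-block of stack `s`. -/
def AtOrBelowLayer {B S : ℕ} (C : Config B S) (V : Set (Fin B)) (s : Fin S) (a : Fin B) : Prop :=
  ∃ b j, b ∈ V ∧ (C s)[j]? = some b ∧ a ∈ (C s).take (j + 1)

/-- `V` is a virtual layer satisfying the conditions of Property 5:
(1) in some stack, a block strictly below the `V`-block of that stack has a smaller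
label than every block of `V`; (2) every badly placed block of `V` has a label
strictly greater than the minimum label present in stack `s` after deleting all
blocks strictly above the `V`-block of `s`, for every stack `s`. -/
def P5 {B S : ℕ} (C : Config B S) (V : Set (Fin B)) : Prop :=
  VirtualLayer C V ∧
  (∃ s a b, b ∈ V ∧ StrictlyBelow C s a b ∧ ∀ c ∈ V, a < c) ∧
  (∀ b ∈ V, BadlyPlaced C b → ∀ s : Fin S, ∃ a, AtOrBelowLayer C V s a ∧ a < b)

/-- A pair of virtual layers `V₁` (upper), `V₂` (lower) with shared well-placed
block `bstar` satisfying the conditions of Property 7. -/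
def P7 {B S : ℕ} (C : Config B S) (V₁ V₂ : Set (Fin B)) (bstar : Fin B) : Prop :=
  V₁ ∩ V₂ = {bstar} ∧
  ¬ BadlyPlaced C bstar ∧
  (∀ s : Fin S, bstar ∉ C s →
    ∃ b₁ b₂, b₁ ∈ V₁ ∧ b₂ ∈ V₂ ∧ StrictlyBelow C s b₂ b₁) ∧
  P5 C V₁ ∧ P5 C V₂ ∧
  (∀ s : Fin S, ∃ a, AtOrBelowLayer C V₁ s a ∧ a ≤ bstar) ∧
  (∃ s : Fin S, ∀ a, AtOrBelowLayer C V₁ s a → bstar ≤ a)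

/-- Push blocks one by one onto the indicated stacks. -/
def pushAll {B S : ℕ} (C : Config B S) : List (Fin B × Fin S) → Config B S
  | [] => C
  | p :: rest => pushAll (Function.update C p.2 (C p.2 ++ [p.1])) rest

/-- The blocks lying strictly above position `i` of stack `s`, listed from the
top of the stack downward (the processing order of the experiment). -/
def aboveList {B S : ℕ} (C : Config B S) (s : Fin S) (i : ℕ) : List (Fin B) :=
  ((C s).drop (i + 1)).reverse

/-- The arrangement resulting from the experiment of Property 4: the blocks above
position `i` of stack `s` are relocated exactly once, from the top downward, onto
the stacks listed in `ds`. -/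
def expResult {B S : ℕ} (C : Config B S) (s : Fin S) (i : ℕ) (ds : List (Fin S)) :
    Config B S :=
  pushAll (Function.update C s ((C s).take (i + 1))) ((aboveList C s i).zip ds)

/-- The condition of Property 4 (target block at position `i` of stack `sStar`):
in every experiment, some relocated block ends badly placed. -/
def P4Cond {B S : ℕ} (C : Config B S) (sStar : Fin S) (i : ℕ) : Prop :=
  ∀ ds : List (Fin S), ds.length = (aboveList C sStar i).length →
    (∀ d ∈ ds, d ≠ sStar) →
    ∃ b ∈ aboveList C sStar i, BadlyPlaced (expResult C sStar i ds) b

/-- The set `𝔅⁴`: the blocks above the target block together with, for each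
nonempty stack other than the target's stack, its block of minimum label. -/
def B4Set {B S : ℕ} (C : Config B S) (sStar : Fin S) (i : ℕ) : Set (Fin B) :=
  {b | b ∈ aboveList C sStar i} ∪
  {b | ∃ s, s ≠ sStar ∧ b ∈ C s ∧ ∀ b' ∈ C s, b ≤ b'}

/-- The number of direct blockages: adjacent pairs in a stack whose upper block
has a strictly larger label. -/
def directBlockages {B S : ℕ} (C : Config B S) : ℕ :=
  ∑ s : Fin S, (((C s).zip (C s).tail).filter (fun p => decide (p.1 < p.2))).length

/-- The number of relocations in a move sequence. -/
def relocCount {S : ℕ} (ms : List (Move S)) : ℕ :=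
  (ms.filter (fun m => match m with | Move.relocate _ _ => true | Move.retrieve _ => false)).length

/-- The minimum number of relocations over all feasible move sequences. -/
noncomputable def fAll {B S : ℕ} (C : Config B S) : ℕ :=
  sInf { n | ∃ ms, Feasible C ms ∧ relocCount ms = n }

/-- `g(L)`: `L` plus the minimum number of direct blockages over all partial
plans with exactly `L` relocations. -/
noncomputable def gIter {B S : ℕ} (C : Config B S) (L : ℕ) : ℕ :=
  L + sInf { d | ∃ ms : List (Move S), AllEnabled C ms ∧ relocCount ms = L ∧
      d = directBlockages (play C ms) }


/-!
A relocation changes the placement of the moved block only, and a retrieval removes a least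
block, which is never badly placed; so along a feasible sequence each relocation makes at most one
block well placed, and the `|𝔅¹|` badly placed blocks need `|𝔅¹|` relocations (LB1). Under the
hypothesis of LB2 every top block lies above a smaller block, so the first move cannot be a
retrieval: it relocates a top block `t` onto a stack holding a block smaller than `t`. No badly
placed block becomes well placed, and LB1 after this extra relocation gives `|𝔅¹| + 1`.
A feasible sequence exists since `S ≥ 2`; without one, `fRel` would be the junk value `sInf ∅ = 0`.
-/

namespace List

theorem pair_sublist_iff_exists_getElem? {α : Type*} {l : List α} {a b : α} :
    [a, b] <+ l ↔ ∃ i j : ℕ, i < j ∧ l[i]? = some a ∧ l[j]? = some b := by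
  -- both sides say that `l` is not pairwise related by `fun x y => ¬ (x = a ∧ y = b)`
  have h := (pairwise_iff_forall_sublist (l := l) (R := fun x y => ¬ (x = a ∧ y = b))).symm.trans
    pairwise_iff_getElem
  constructor
  · intro hab
    by_contra! hne
    refine h.2 (fun i j hi hj hij ⟨hia, hjb⟩ => ?_) hab ⟨rfl, rfl⟩
    exact hne i j hij (getElem?_eq_some_iff.2 ⟨hi, hia⟩) (getElem?_eq_some_iff.2 ⟨hj, hjb⟩)
  · rintro ⟨i, j, hij, hi, hj⟩
    by_contra hab
    obtain ⟨hil, rfl⟩ := getElem?_eq_some_iff.1 hi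
    obtain ⟨hjl, rfl⟩ := getElem?_eq_some_iff.1 hj
    exact h.1 (fun hxy ⟨hx, hy⟩ => hab (hx ▸ hy ▸ hxy)) i j hil hjl hij ⟨rfl, rfl⟩

theorem exists_getLast?_eq_some {α : Type*} {l : List α} (h : l ≠ []) :
    ∃ t, l.getLast? = some t :=
  ⟨_, getLast?_eq_some_getLast h⟩

theorem Sublist.of_concat {α : Type*} {l₁ l : List α} {t : α} (h : l₁ <+ l ++ [t])
    (ht : l₁.getLast? ≠ some t) : l₁ <+ l := by
  obtain ⟨r₁, r₂, rfl, h₁, h₂⟩ := sublist_append_iff.1 h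
  rcases sublist_singleton.1 h₂ with rfl | rfl
  · simpa using h₁
  · simp at ht

end List

section Blocks

variable {B S : ℕ}

theorem strictlyBelow_iff_sublist {C : Config B S} {s : Fin S} {a b : Fin B} :
    StrictlyBelow C s a b ↔ List.Sublist [a, b] (C s) :=
  List.pair_sublist_iff_exists_getElem?.symm

theorem not_badlyPlaced_of_forall_eq_nil {C : Config B S} (h : ∀ s, C s = []) (b : Fin B) :
    ¬ BadlyPlaced C b := by
  rintro ⟨s, a, -, hbelow⟩
  rw [strictlyBelow_iff_sublist, h s] at hbelow
  simp at hbelow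

theorem BadlyPlaced.of_isPrefix {C C' : Config B S} {src : Fin S} {t b : Fin B}
    (htop : (C src).getLast? = some t) (hsrc : List.IsPrefix (C src).dropLast (C' src))
    (hother : ∀ s, s ≠ src → List.IsPrefix (C s) (C' s)) (hbt : b ≠ t)
    (hb : BadlyPlaced C b) : BadlyPlaced C' b := by
  obtain ⟨s, a, hab, hbelow⟩ := hb
  rw [strictlyBelow_iff_sublist] at hbelow
  refine ⟨s, a, hab, strictlyBelow_iff_sublist.2 ?_⟩
  by_cases hs : s = src
  · subst hs
    obtain ⟨ys, hys⟩ := List.getLast?_eq_some_iff.1 htop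
    rw [hys, List.dropLast_concat] at hsrc
    rw [hys] at hbelow
    exact (hbelow.of_concat (by simpa using hbt)).trans hsrc.sublist
  · exact hbelow.trans (hother s hs).sublist

theorem applyMove_relocate_of_getLast? {C : Config B S} {src dst : Fin S} {t : Fin B}
    (htop : (C src).getLast? = some t) :
    applyMove C (.relocate src dst) =
      Function.update (Function.update C src (C src).dropLast) dst
        (Function.update C src (C src).dropLast dst ++ [t]) := by
  simp only [applyMove, htop]

section Relocate

variable {C : Config B S} {src dst : Fin S} {t : Fin B}

theorem applyMove_relocate_dst (hsd : src ≠ dst) (htop : (C src).getLast? = some t) :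
    applyMove C (.relocate src dst) dst = C dst ++ [t] := by
  rw [applyMove_relocate_of_getLast? htop, Function.update_self,
    Function.update_of_ne hsd.symm]

theorem applyMove_relocate_src (hsd : src ≠ dst) (htop : (C src).getLast? = some t) :
    applyMove C (.relocate src dst) src = (C src).dropLast := by
  rw [applyMove_relocate_of_getLast? htop, Function.update_of_ne hsd, Function.update_self]

theorem applyMove_relocate_of_ne {s : Fin S} (htop : (C src).getLast? = some t)
    (hs : s ≠ src) (hd : s ≠ dst) : applyMove C (.relocate src dst) s = C s := by
  rw [applyMove_relocate_of_getLast? htop, Function.update_of_ne hd, Function.update_of_ne hs]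

theorem BadlyPlaced.applyMove_relocate (hsd : src ≠ dst) (htop : (C src).getLast? = some t)
    {b : Fin B} (hbt : b ≠ t) (hb : BadlyPlaced C b) :
    BadlyPlaced (applyMove C (.relocate src dst)) b := by
  refine hb.of_isPrefix htop (by rw [applyMove_relocate_src hsd htop]) (fun s hs => ?_) hbt
  by_cases hd : s = dst
  · subst hd
    rw [applyMove_relocate_dst hsd htop]
    exact List.prefix_append _ _
  · rw [applyMove_relocate_of_ne htop hs hd]

theorem badlyPlaced_applyMove_relocate_self (hsd : src ≠ dst)
    (htop : (C src).getLast? = some t) {a : Fin B} (ha : a ∈ C dst) (hat : a < t) :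
    BadlyPlaced (applyMove C (.relocate src dst)) t := by
  refine ⟨dst, a, hat, strictlyBelow_iff_sublist.2 ?_⟩
  rw [applyMove_relocate_dst hsd htop]
  exact (List.singleton_sublist.2 ha).append (List.Sublist.refl [t])

end Relocate

theorem BadlyPlaced.applyMove_retrieve {C : Config B S} {s₀ : Fin S} {b : Fin B}
    (hen : Enabled C (.retrieve s₀)) (hb : BadlyPlaced C b) :
    BadlyPlaced (applyMove C (.retrieve s₀)) b := by
  obtain ⟨t, htop, hmin⟩ := hen
  have hbt : b ≠ t := by
    obtain ⟨s, a, hab, hbelow⟩ := hb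
    rintro rfl
    have ha : a ∈ C s := (strictlyBelow_iff_sublist.1 hbelow).subset (List.mem_cons_self)
    exact (hmin s a ha).not_gt hab
  refine hb.of_isPrefix htop (by simp [applyMove]) (fun s hs => ?_) hbt
  simp [applyMove, hs]

theorem feasible_cons {C : Config B S} {m : Move S} {ms : List (Move S)} :
    Feasible C (m :: ms) ↔ Enabled C m ∧ Feasible (applyMove C m) ms :=
  and_assoc

theorem countMoves_cons_of_pos {P : Config B S → Move S → Prop} {C : Config B S} {m : Move S}
    (ms : List (Move S)) (h : P C m) :
    countMoves P C (m :: ms) = countMoves P (applyMove C m) ms + 1 := by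
  simp only [countMoves, if_pos h]
  omega

theorem countMoves_cons_of_neg {P : Config B S → Move S → Prop} {C : Config B S} {m : Move S}
    (ms : List (Move S)) (h : ¬ P C m) :
    countMoves P C (m :: ms) = countMoves P (applyMove C m) ms := by
  simp only [countMoves, if_neg h, zero_add]

theorem relocIn_univ_relocate {C : Config B S} {src dst : Fin S}
    (h : Enabled C (.relocate src dst)) : RelocIn Set.univ C (.relocate src dst) := by
  obtain ⟨hsd, hne⟩ := h
  obtain ⟨t, htop⟩ := List.exists_getLast?_eq_some hne
  exact ⟨t, Set.mem_univ t, src, dst, rfl, hsd, htop⟩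

theorem not_relocIn_retrieve (𝔅 : Set (Fin B)) (C : Config B S) (s : Fin S) :
    ¬ RelocIn 𝔅 C (.retrieve s) := by
  rintro ⟨b, -, src, dst, h, -⟩
  cases h

theorem ncard_badlyPlaced_le_countMoves {C : Config B S} {ms : List (Move S)}
    (hms : Feasible C ms) :
    {b | BadlyPlaced C b}.ncard ≤ countMoves (RelocIn Set.univ) C ms := by
  induction ms generalizing C with
  | nil =>
    have hempty : {b | BadlyPlaced C b} = ∅ :=
      Set.eq_empty_of_forall_notMem (not_badlyPlaced_of_forall_eq_nil hms.2)
    simp [hempty]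
  | cons m ms ih =>
    obtain ⟨hm, hrest⟩ := feasible_cons.1 hms
    cases m with
    | retrieve s₀ =>
      rw [countMoves_cons_of_neg ms (not_relocIn_retrieve _ C s₀)]
      exact (Set.ncard_le_ncard (fun b hb => hb.applyMove_retrieve hm) (Set.toFinite _)).trans
        (ih hrest)
    | relocate src dst =>
      rw [countMoves_cons_of_pos ms (relocIn_univ_relocate hm)]
      obtain ⟨t, htop⟩ := List.exists_getLast?_eq_some hm.2
      have hsub : {b | BadlyPlaced C b} ⊆
          insert t {b | BadlyPlaced (applyMove C (.relocate src dst)) b} := fun b hb =>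
        or_iff_not_imp_left.2 fun hbt => hb.applyMove_relocate hm.1 htop hbt
      calc {b | BadlyPlaced C b}.ncard
          ≤ (insert t {b | BadlyPlaced (applyMove C (.relocate src dst)) b}).ncard :=
            Set.ncard_le_ncard hsub (Set.toFinite _)
        _ ≤ {b | BadlyPlaced (applyMove C (.relocate src dst)) b}.ncard + 1 :=
            Set.ncard_insert_le _ _
        _ ≤ _ := by have := ih hrest; omega

theorem ncard_badlyPlaced_lt_countMoves {C : Config B S}
    (hcond : ∀ b ∈ TopLayer C, ∀ s : Fin S, ∃ b' ∈ C s, b' < b) (hne : ∃ s, C s ≠ [])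
    {ms : List (Move S)} (hms : Feasible C ms) :
    {b | BadlyPlaced C b}.ncard < countMoves (RelocIn Set.univ) C ms := by
  cases ms with
  | nil =>
    obtain ⟨s, hs⟩ := hne
    exact absurd (hms.2 s) hs
  | cons m ms =>
    obtain ⟨hm, hrest⟩ := feasible_cons.1 hms
    cases m with
    | retrieve s₀ =>
      obtain ⟨t, htop, hmin⟩ := hm
      obtain ⟨b', hb', hlt⟩ := hcond t ⟨s₀, htop⟩ s₀
      exact absurd (hmin s₀ b' hb') hlt.not_ge
    | relocate src dst =>
      rw [countMoves_cons_of_pos ms (relocIn_univ_relocate hm)]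
      obtain ⟨t, htop⟩ := List.exists_getLast?_eq_some hm.2
      have hsub : {b | BadlyPlaced C b} ⊆
          {b | BadlyPlaced (applyMove C (.relocate src dst)) b} := by
        intro b hb
        by_cases hbt : b = t
        · obtain ⟨a, ha, hat⟩ := hcond t ⟨src, htop⟩ dst
          exact hbt ▸ badlyPlaced_applyMove_relocate_self hm.1 htop ha hat
        · exact hb.applyMove_relocate hm.1 htop hbt
      have := Set.ncard_le_ncard hsub (Set.toFinite _)
      have := ncard_badlyPlaced_le_countMoves hrest
      omega

theorem le_fMin {C : Config B S} {P : Config B S → Move S → Prop} {n : ℕ}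
    (hex : ∃ ms, Feasible C ms) (h : ∀ ms, Feasible C ms → n ≤ countMoves P C ms) :
    n ≤ fMin C P := by
  obtain ⟨ms₀, hms₀⟩ := hex
  refine le_csInf ⟨_, ms₀, hms₀, rfl⟩ ?_
  rintro _ ⟨ms, hms, rfl⟩
  exact h ms hms

end Blocks

section Feasibility

variable {B S : ℕ}

def numBlocks (C : Config B S) : ℕ :=
  ∑ s, (C s).length

theorem numBlocks_eq_zero_iff {C : Config B S} : numBlocks C = 0 ↔ ∀ s, C s = [] := by
  simp [numBlocks, Finset.sum_eq_zero_iff]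

theorem numBlocks_update (C : Config B S) (s : Fin S) (l : List (Fin B)) :
    numBlocks (Function.update C s l) + (C s).length = numBlocks C + l.length := by
  simp only [numBlocks, ← Finset.add_sum_erase _ _ (Finset.mem_univ s), Function.update_self]
  rw [Finset.sum_congr rfl fun s' hs' => by rw [Function.update_of_ne (Finset.ne_of_mem_erase hs')]]
  omega

theorem numBlocks_applyMove_retrieve {C : Config B S} {s : Fin S} (h : C s ≠ []) :
    numBlocks (applyMove C (.retrieve s)) + 1 = numBlocks C := by
  have := numBlocks_update C s (C s).dropLast
  have := List.length_pos_iff.2 h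
  simp only [applyMove, List.length_dropLast] at *
  omega

theorem numBlocks_applyMove_relocate {C : Config B S} {src dst : Fin S} {t : Fin B}
    (hsd : src ≠ dst) (htop : (C src).getLast? = some t) :
    numBlocks (applyMove C (.relocate src dst)) = numBlocks C := by
  have h₁ := numBlocks_update C src (C src).dropLast
  have h₂ := numBlocks_update (Function.update C src (C src).dropLast) dst
    (Function.update C src (C src).dropLast dst ++ [t])
  have := List.length_pos_iff.2 (List.ne_nil_of_mem (List.mem_of_getLast? htop))
  rw [Function.update_of_ne hsd.symm] at h₂
  rw [applyMove_relocate_of_getLast? htop, Function.update_of_ne hsd.symm]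
  simp only [List.length_append, List.length_dropLast, List.length_singleton] at h₁ h₂
  omega

theorem exists_mem_of_mem_applyMove_relocate {C : Config B S} {src dst s : Fin S} {t b : Fin B}
    (hsd : src ≠ dst) (htop : (C src).getLast? = some t)
    (hb : b ∈ applyMove C (.relocate src dst) s) : ∃ s', b ∈ C s' := by
  by_cases hd : s = dst
  · subst hd
    rw [applyMove_relocate_dst hsd htop, List.mem_append, List.mem_singleton] at hb
    rcases hb with hb | rfl
    · exact ⟨s, hb⟩
    · exact ⟨src, List.mem_of_getLast? htop⟩
  by_cases hs : s = src
  · subst hs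
    rw [applyMove_relocate_src hsd htop] at hb
    exact ⟨s, List.dropLast_subset _ hb⟩
  · exact ⟨s, applyMove_relocate_of_ne htop hs hd ▸ hb⟩

theorem exists_least_block {C : Config B S} (hne : ∃ s, C s ≠ []) :
    ∃ s b, b ∈ C s ∧ ∀ s', ∀ b' ∈ C s', b ≤ b' := by
  classical
  have hF : (Finset.univ.biUnion fun s => (C s).toFinset).Nonempty := by
    obtain ⟨s, hs⟩ := hne
    obtain ⟨b, hb⟩ := List.exists_mem_of_ne_nil _ hs
    exact ⟨b, Finset.mem_biUnion.2 ⟨s, Finset.mem_univ s, List.mem_toFinset.2 hb⟩⟩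
  obtain ⟨b, hb, hmin⟩ := Finset.exists_min_image _ id hF
  obtain ⟨s, -, hbs⟩ := Finset.mem_biUnion.1 hb
  exact ⟨s, b, List.mem_toFinset.1 hbs, fun s' b' hb' =>
    hmin b' (Finset.mem_biUnion.2 ⟨s', Finset.mem_univ s', List.mem_toFinset.2 hb'⟩)⟩

/-- The greedy plan: relocate the blocks above the least block `b` elsewhere, then retrieve `b`. -/
theorem exists_feasible_of_least_mem (hS : 2 ≤ S) {n : ℕ}
    (ih : ∀ C : Config B S, numBlocks C = n → ∃ ms, Feasible C ms) {k : ℕ} {C : Config B S}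
    {s : Fin S} {b : Fin B} (hk : (C s).length = k) (hn : numBlocks C = n + 1) (hb : b ∈ C s)
    (hmin : ∀ s', ∀ b' ∈ C s', b ≤ b') : ∃ ms, Feasible C ms := by
  induction k generalizing C with
  | zero => exact absurd (List.length_eq_zero_iff.1 hk) (List.ne_nil_of_mem hb)
  | succ k ihk =>
    have hCs := List.ne_nil_of_mem hb
    obtain ⟨t, htop⟩ := List.exists_getLast?_eq_some hCs
    by_cases htb : t = b
    · subst htb
      have hn' := numBlocks_applyMove_retrieve hCs
      obtain ⟨ms, hms⟩ := ih (applyMove C (.retrieve s)) (by omega)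
      exact ⟨.retrieve s :: ms, feasible_cons.2 ⟨⟨t, htop, hmin⟩, hms⟩⟩
    obtain ⟨d, hds⟩ := Fintype.exists_ne_of_one_lt_card (by rw [Fintype.card_fin]; omega) s
    have hsd : s ≠ d := hds.symm
    have hk' : (applyMove C (.relocate s d) s).length = k := by
      rw [applyMove_relocate_src hsd htop, List.length_dropLast]
      omega
    have hb' : b ∈ applyMove C (.relocate s d) s := by
      obtain ⟨ys, hys⟩ := List.getLast?_eq_some_iff.1 htop
      rw [applyMove_relocate_src hsd htop, hys, List.dropLast_concat]
      rw [hys, List.mem_append, List.mem_singleton] at hb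
      exact hb.resolve_right (Ne.symm htb)
    have hmin' : ∀ s', ∀ b' ∈ applyMove C (.relocate s d) s', b ≤ b' := fun s' b' hb' =>
      let ⟨s'', hs''⟩ := exists_mem_of_mem_applyMove_relocate hsd htop hb'
      hmin s'' b' hs''
    obtain ⟨ms, hms⟩ := ihk hk' (numBlocks_applyMove_relocate hsd htop ▸ hn) hb' hmin'
    exact ⟨.relocate s d :: ms, feasible_cons.2 ⟨⟨hsd, hCs⟩, hms⟩⟩

theorem exists_feasible (hS : 2 ≤ S) (C : Config B S) : ∃ ms, Feasible C ms := by
  obtain ⟨n, hn⟩ : ∃ n, numBlocks C = n := ⟨_, rfl⟩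
  induction n generalizing C with
  | zero => exact ⟨[], trivial, numBlocks_eq_zero_iff.1 hn⟩
  | succ n ih =>
    have hne : ∃ s, C s ≠ [] := by
      by_contra! h
      simp [numBlocks_eq_zero_iff.2 h] at hn
    obtain ⟨s, b, hb, hmin⟩ := exists_least_block hne
    exact exists_feasible_of_least_mem hS ih rfl hn hb hmin

end Feasibility

theorem brp_LB2_general {B S : ℕ} (hS : 2 ≤ S)
    (C : Config B S) (hne : ∀ s, C s ≠ [])
    (hcond : ∀ b ∈ TopLayer C, ∀ s : Fin S, ∃ b' ∈ C s, b' < b) :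
    {b | BadlyPlaced C b}.ncard + 1 ≤ fRel C Set.univ :=
  le_fMin (exists_feasible hS C) fun _ hms =>
    ncard_badlyPlaced_lt_countMoves hcond ⟨⟨0, by omega⟩, hne _⟩ hms

/-- validity of LB2: if every stack is nonempty and the minimum
label of the top 1st layer is strictly greater than the maximum over the stacks
of the minimum label in the stack, then `f(Fin B) ≥ |𝔅¹| + 1`, where `𝔅¹` is the
set of badly placed blocks of `C`. -/
theorem brp_LB2 {B S : ℕ} (hS : 2 ≤ S) (hB : 1 ≤ B)
    (C : Config B S) (hC : IsConfig C) (hne : ∀ s, C s ≠ [])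
    (hcond : ∀ b ∈ TopLayer C, ∀ s : Fin S, ∃ b' ∈ C s, b' < b) :
    {b | BadlyPlaced C b}.ncard + 1 ≤ fRel C Set.univ :=
  brp_LB2_general hS C hne hcond
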